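/- Let σ be a primitive substitution on {1,…,m} whose substitution matrix M_σ is diagonalizable over ℂ and which is a Pisot substitution. Let w = (ℓ_1,…,ℓ_m) be a positive row vector with wM_σ = λw (λ the Perron–Frobenius eigenvalue), let v be the positive right eigenvector of M_σ for λ normalized so its entries sum to 1, and set δ = w·v. Let u : ℕ → {1,…,m} be a one-sided fixed point of σ and define x_j = Σ_{t<j} ℓ_{u_t} for j ∈ ℕ. Then sup_{j ∈ ℕ} |x_j − j·δ| < ∞; in particular the point set {x_j : j ∈ ℕ} is bounded distance equivalent to the set {j·δ : j ∈ ℕ}. -/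

import Mathlib

open Matrix Polynomial

/-- Application of a substitution to a word, by concatenation. -/
def substWord {m : ℕ} (σ : Fin m → List (Fin m)) (u : List (Fin m)) : List (Fin m) :=
  u.flatMap σ

/-- The substitution matrix: the `(i,j)` entry counts occurrences of letter `i` in `σ(j)`. -/
def substMatrix {m : ℕ} (σ : Fin m → List (Fin m)) : Matrix (Fin m) (Fin m) ℕ :=
  fun i j => (σ j).count i

/-- `u : ℕ → Fin m` is a one-sided fixed point of `σ`: for every `n`, the concatenation
`σ(u_0)σ(u_1)⋯σ(u_{n-1})` is an initial segment of `u`. -/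
def IsFixedPoint {m : ℕ} (σ : Fin m → List (Fin m)) (u : ℕ → Fin m) : Prop :=
  ∀ n : ℕ, ∀ j : ℕ, (hj : j < ((List.range n).flatMap (fun t => σ (u t))).length) →
    ((List.range n).flatMap (fun t => σ (u t))).get ⟨j, hj⟩ = u j

/-- Bounded distance equivalence of point sets in `ℝ`. -/
def BDE (Λ Λ' : Set ℝ) : Prop :=
  ∃ c : ℝ, 0 < c ∧ ∃ φ : Λ ≃ Λ', ∀ x : Λ, |(x : ℝ) - (φ x : ℝ)| < c

/-! ### Auxiliary lemmas -/

lemma my_charpoly_conj {m : ℕ} (C D : Matrix (Fin m) (Fin m) ℂ) (hC : IsUnit C.det) :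
    (C * D * C⁻¹).charpoly = D.charpoly := by
  have hCC : C * C⁻¹ = 1 := Matrix.mul_nonsing_inv C hC
  have hCC' : C⁻¹ * C = 1 := Matrix.nonsing_inv_mul C hC
  set f : ℂ →+* ℂ[X] := (Polynomial.C : ℂ →+* ℂ[X]) with hf
  set Cp : Matrix (Fin m) (Fin m) ℂ[X] := f.mapMatrix C with hCp
  have hCpdet : IsUnit Cp.det := by
    rw [hCp, ← RingHom.map_det]
    exact hC.map f
  have hscalar : ∀ (E : Matrix (Fin m) (Fin m) ℂ[X]),
      Matrix.scalar (Fin m) (X : ℂ[X]) * E = E * Matrix.scalar (Fin m) (X : ℂ[X]) := by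
    intro E
    exact (Matrix.scalar_commute (X : ℂ[X]) (fun r' => Commute.all _ _) E).eq
  have key : charmatrix (C * D * C⁻¹) * Cp = Cp * charmatrix D := by
    rw [charmatrix, charmatrix]
    have hmap : f.mapMatrix (C * D * C⁻¹) = Cp * f.mapMatrix D * f.mapMatrix C⁻¹ := by
      simp [RingHom.mapMatrix_apply, Matrix.map_mul, hCp]
    rw [sub_mul, mul_sub, hmap]
    congr 1
    · exact hscalar Cp
    · have h1 : f.mapMatrix C⁻¹ * Cp = 1 := by
        rw [hCp, ← RingHom.map_mul, hCC']
        simp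
      rw [Matrix.mul_assoc (Cp * f.mapMatrix D), h1, Matrix.mul_one]
  have hdet : (C * D * C⁻¹).charpoly * Cp.det = Cp.det * D.charpoly := by
    rw [Matrix.charpoly, Matrix.charpoly, ← Matrix.det_mul, key, Matrix.det_mul]
  rw [mul_comm] at hdet
  exact mul_left_cancel₀ hCpdet.ne_zero hdet

lemma my_charpoly_diagonal {m : ℕ} (d : Fin m → ℂ) :
    (Matrix.diagonal d).charpoly = ∏ i, (X - Polynomial.C (d i)) := by
  have h : charmatrix (Matrix.diagonal d) = Matrix.diagonal (fun i => X - Polynomial.C (d i)) := by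
    ext i j
    by_cases hij : i = j
    · subst hij; simp [charmatrix_apply_eq]
    · simp [charmatrix_apply_ne _ _ _ hij, Matrix.diagonal_apply_ne _ hij]
  rw [Matrix.charpoly, h, Matrix.det_diagonal]

lemma spectral_bound {m : ℕ} (A : Matrix (Fin m) (Fin m) ℂ)
    (C D : Matrix (Fin m) (Fin m) ℂ) (hC : IsUnit C.det) (hD : D.IsDiag)
    (hfact : A = C * D * C⁻¹) (lam : ℂ)
    (hsimple : A.charpoly.rootMultiplicity lam = 1)
    (hsmall : ∀ z, A.charpoly.IsRoot z → z ≠ lam → ‖z‖ < 1)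
    (v : Fin m → ℂ) (hv : v ≠ 0) (hveig : A.mulVec v = lam • v)
    (g : Fin m → ℂ) (hgv : g ⬝ᵥ v = 0) :
    ∃ K θ : ℝ, 0 ≤ K ∧ 0 ≤ θ ∧ θ < 1 ∧
      ∀ k : ℕ, ∀ i, ‖Matrix.vecMul g (A ^ k) i‖ ≤ K * θ ^ k := by
  classical
  have hCC : C * C⁻¹ = 1 := Matrix.mul_nonsing_inv C hC
  have hCC' : C⁻¹ * C = 1 := Matrix.nonsing_inv_mul C hC
  set d : Fin m → ℂ := fun i => D i i with hd
  have hDdiag : D = Matrix.diagonal d := (Matrix.IsDiag.diagonal_diag hD).symm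
  have hcp : A.charpoly = ∏ i, (X - Polynomial.C (d i)) := by
    rw [hfact, my_charpoly_conj C D hC, hDdiag, my_charpoly_diagonal]
  have hcp' : A.charpoly = ((Finset.univ.val.map d).map (fun a => X - Polynomial.C a)).prod := by
    rw [hcp, Multiset.map_map]
    rfl
  have hroots : A.charpoly.roots = Finset.univ.val.map d := by
    rw [hcp', Polynomial.roots_multiset_prod_X_sub_C]
  have hcount : (Finset.univ.val.map d).count lam = 1 := by
    rw [← hroots, Polynomial.count_roots, hsimple]
  have hfilter : (Finset.univ.filter (fun i => lam = d i)).card = 1 := by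
    rw [Multiset.count_map] at hcount
    exact hcount
  obtain ⟨i0, hi0⟩ := Finset.card_eq_one.mp hfilter
  have hdi0 : d i0 = lam := by
    have : i0 ∈ Finset.univ.filter (fun i => lam = d i) := by
      rw [hi0]; exact Finset.mem_singleton_self i0
    exact ((Finset.mem_filter.mp this).2).symm
  have hne : ∀ i, i ≠ i0 → d i ≠ lam := by
    intro i hi hcontra
    have : i ∈ Finset.univ.filter (fun i => lam = d i) :=
      Finset.mem_filter.mpr ⟨Finset.mem_univ i, hcontra.symm⟩
    rw [hi0, Finset.mem_singleton] at this
    exact hi this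
  have hcpne : A.charpoly ≠ 0 := (Matrix.charpoly_monic A).ne_zero
  have hsmall' : ∀ i, i ≠ i0 → ‖d i‖ < 1 := by
    intro i hi
    refine hsmall (d i) ?_ (hne i hi)
    rw [← Polynomial.mem_roots hcpne, hroots]
    exact Multiset.mem_map_of_mem d (Finset.mem_univ_val i)
  set θ' : NNReal := Finset.univ.sup (fun i => if i = i0 then 0 else ‖d i‖₊) with hθ'
  set θ : ℝ := (θ' : ℝ) with hθ
  have hθ0 : 0 ≤ θ := θ'.coe_nonneg
  have hθ1 : θ < 1 := by
    rw [hθ, ← NNReal.coe_one, NNReal.coe_lt_coe, hθ']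
    apply Finset.sup_lt_iff (by norm_num : (⊥ : NNReal) < 1) |>.mpr
    intro i _
    by_cases hi : i = i0
    · simp [hi]
    · simp only [hi, if_false]
      have := hsmall' i hi
      rw [← NNReal.coe_lt_one, coe_nnnorm]
      exact this
  have hθle : ∀ i, i ≠ i0 → ‖d i‖ ≤ θ := by
    intro i hi
    have : (fun i => if i = i0 then 0 else ‖d i‖₊) i ≤ θ' :=
      Finset.le_sup (f := fun i => if i = i0 then 0 else ‖d i‖₊) (Finset.mem_univ i)
    simp only [hi, if_false] at this
    calc ‖d i‖ = ((‖d i‖₊ : ℝ)) := by rw [coe_nnnorm]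
      _ ≤ θ := NNReal.coe_le_coe.mpr this
  set y : Fin m → ℂ := C⁻¹ *ᵥ v with hy
  have hCy : C *ᵥ y = v := by
    rw [hy, Matrix.mulVec_mulVec, hCC, Matrix.one_mulVec]
  have hAC : A * C = C * D := by
    rw [hfact, Matrix.mul_assoc (C * D), hCC', Matrix.mul_one]
  have hDy : D *ᵥ y = lam • y := by
    have h1 : C *ᵥ (D *ᵥ y) = C *ᵥ (lam • y) := by
      rw [Matrix.mulVec_mulVec, ← hAC, ← Matrix.mulVec_mulVec, hCy, hveig, Matrix.mulVec_smul, hCy]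
    have h2 := congrArg (fun z => C⁻¹ *ᵥ z) h1
    simpa [Matrix.mulVec_mulVec, ← Matrix.mul_assoc, hCC', Matrix.one_mulVec] using h2
  have hyi : ∀ i, i ≠ i0 → y i = 0 := by
    intro i hi
    have h1 : d i * y i = lam * y i := by
      have := congrFun hDy i
      rwa [hDdiag, Matrix.mulVec_diagonal, Pi.smul_apply, smul_eq_mul] at this
    by_contra hne0
    exact hne i hi (mul_right_cancel₀ hne0 h1)
  have hyi0 : y i0 ≠ 0 := by
    intro h0
    apply hv
    have : y = 0 := by
      funext i
      by_cases hi : i = i0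
      · rw [hi]; exact h0
      · exact hyi i hi
    rw [← hCy, this, Matrix.mulVec_zero]
  set h : Fin m → ℂ := Matrix.vecMul g C with hh
  have hkey : h i0 = 0 := by
    have h1 : (0 : ℂ) = h ⬝ᵥ y := by
      rw [← hgv, ← hCy, dotProduct_mulVec, hh]
    have h2 : h ⬝ᵥ y = h i0 * y i0 := by
      rw [dotProduct]
      apply Finset.sum_eq_single i0
      · intro i _ hi
        rw [hyi i hi, mul_zero]
      · intro hmem; exact absurd (Finset.mem_univ i0) hmem
    have := h1.trans h2
    exact (mul_eq_zero.mp this.symm).resolve_right hyi0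
  set K : ℝ := ∑ i, ∑ j, ‖h i‖ * ‖C⁻¹ i j‖ with hK
  have hK0 : 0 ≤ K := Finset.sum_nonneg fun i _ => Finset.sum_nonneg fun j _ =>
    mul_nonneg (norm_nonneg _) (norm_nonneg _)
  refine ⟨K, θ, hK0, hθ0, hθ1, ?_⟩
  intro k i
  have hACk : A ^ k * C = C * D ^ k := by
    induction k with
    | zero => simp
    | succ n ih =>
      rw [pow_succ, pow_succ, Matrix.mul_assoc, hAC, ← Matrix.mul_assoc, ih, Matrix.mul_assoc]
  have hAk : A ^ k = C * D ^ k * C⁻¹ := by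
    rw [← hACk, Matrix.mul_assoc, hCC, Matrix.mul_one]
  have hDk : D ^ k = Matrix.diagonal (fun i => d i ^ k) := by
    rw [hDdiag, Matrix.diagonal_pow]
    rfl
  have hvm : Matrix.vecMul g (A ^ k) i = ∑ t, h t * d t ^ k * C⁻¹ t i := by
    rw [hAk, ← Matrix.vecMul_vecMul, ← Matrix.vecMul_vecMul, ← hh, hDk]
    rw [Matrix.vecMul]
    congr 1
    funext t
    rw [Matrix.vecMul_diagonal]
  rw [hvm]
  calc ‖∑ t, h t * d t ^ k * C⁻¹ t i‖
      ≤ ∑ t, ‖h t * d t ^ k * C⁻¹ t i‖ := norm_sum_le _ _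
    _ ≤ ∑ t, ‖h t‖ * ‖C⁻¹ t i‖ * θ ^ k := by
        apply Finset.sum_le_sum
        intro t _
        rw [norm_mul, norm_mul, norm_pow]
        by_cases ht : t = i0
        · rw [ht, hkey]
          simp only [norm_zero, zero_mul]
          positivity
        · have h1 : ‖d t‖ ^ k ≤ θ ^ k :=
            pow_le_pow_left₀ (norm_nonneg _) (hθle t ht) k
          calc ‖h t‖ * ‖d t‖ ^ k * ‖C⁻¹ t i‖
              ≤ ‖h t‖ * θ ^ k * ‖C⁻¹ t i‖ := by
                apply mul_le_mul_of_nonneg_right _ (norm_nonneg _)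
                exact mul_le_mul_of_nonneg_left h1 (norm_nonneg _)
            _ = ‖h t‖ * ‖C⁻¹ t i‖ * θ ^ k := by ring
    _ = (∑ t, ‖h t‖ * ‖C⁻¹ t i‖) * θ ^ k := by
        rw [Finset.sum_mul]
    _ ≤ K * θ ^ k := by
        apply mul_le_mul_of_nonneg_right _ (pow_nonneg hθ0 k)
        rw [hK]
        apply Finset.sum_le_sum
        intro t _
        exact Finset.single_le_sum (f := fun j => ‖h t‖ * ‖C⁻¹ t j‖)
          (fun j _ => mul_nonneg (norm_nonneg _) (norm_nonneg _)) (Finset.mem_univ i)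

lemma list_sum_map_count {m : ℕ} (l : List (Fin m)) (h : Fin m → ℝ) :
    (l.map h).sum = ∑ i, (l.count i : ℝ) * h i := by
  induction l with
  | nil => simp
  | cons a l ih =>
    simp only [List.map_cons, List.sum_cons, ih, List.count_cons]
    push_cast
    simp [add_mul, Finset.sum_add_distrib, ite_mul, Finset.sum_ite_eq']
    ring

lemma list_sum_get {m : ℕ} (l : List (Fin m)) (h : Fin m → ℝ) :
    ∑ i : Fin l.length, h l[(i:ℕ)] = (l.map h).sum := by
  conv_rhs => rw [← List.ofFn_getElem (xs := l)]
  rw [List.map_ofFn, List.sum_ofFn]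
  rfl

section Comb

variable {m : ℕ} (σ : Fin m → List (Fin m)) (u : ℕ → Fin m)

def Wrd (n : ℕ) : List (Fin m) := (List.range n).flatMap (fun t => σ (u t))

def lenW (n : ℕ) : ℕ := (Wrd σ u n).length

def rr (j : ℕ) : ℕ := Nat.findGreatest (fun q => lenW σ u q ≤ j) j

lemma Wrd_succ (n : ℕ) : Wrd σ u (n + 1) = Wrd σ u n ++ σ (u n) := by
  unfold Wrd
  rw [List.range_succ, List.flatMap_append]
  simp

lemma lenW_succ (n : ℕ) : lenW σ u (n + 1) = lenW σ u n + (σ (u n)).length := by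
  rw [lenW, Wrd_succ, List.length_append]
  rfl

lemma lenW_zero : lenW σ u 0 = 0 := rfl

lemma lenW_ge (hσ : ∀ i, σ i ≠ []) (n : ℕ) : n ≤ lenW σ u n := by
  induction n with
  | zero => simp [lenW_zero]
  | succ n ih =>
    rw [lenW_succ]
    have := List.length_pos_iff.mpr (hσ (u n))
    omega

lemma u_letters (hu : IsFixedPoint σ u) (n : ℕ) (i : ℕ) (hi : i < (σ (u n)).length) :
    u (lenW σ u n + i) = (σ (u n))[i] := by
  have hlt : lenW σ u n + i < ((List.range (n + 1)).flatMap (fun t => σ (u t))).length := by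
    have : ((List.range (n + 1)).flatMap (fun t => σ (u t))).length = lenW σ u (n + 1) := rfl
    rw [this, lenW_succ]
    omega
  have h1 := hu (n + 1) (lenW σ u n + i) hlt
  rw [List.get_eq_getElem] at h1
  rw [← h1]
  have h2 : ((List.range (n + 1)).flatMap (fun t => σ (u t))) = Wrd σ u n ++ σ (u n) :=
    Wrd_succ σ u n
  rw [List.getElem_of_eq h2]
  convert (List.getElem_append_right' (Wrd σ u n) hi).symm using 2
  have hlw : (Wrd σ u n).length = lenW σ u n := rfl
  have hfin : (⟨lenW σ u n + i, hlt⟩ :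
      Fin ((List.range (n + 1)).flatMap fun t => σ (u t)).length).val = lenW σ u n + i := rfl
  omega

lemma rr_le (j : ℕ) : rr σ u j ≤ j := Nat.findGreatest_le j

lemma lenW_rr_le (j : ℕ) : lenW σ u (rr σ u j) ≤ j := by
  rw [rr]
  exact Nat.findGreatest_spec (P := fun q => lenW σ u q ≤ j) (Nat.zero_le j) (by simp [lenW_zero])

lemma lt_lenW_rr (hσ : ∀ i, σ i ≠ []) (j : ℕ) : j < lenW σ u (rr σ u j + 1) := by
  by_cases h : rr σ u j + 1 ≤ j
  · by_contra h'
    push_neg at h'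
    exact Nat.findGreatest_is_greatest (Nat.lt_succ_self _) h h'
  · have h2 : rr σ u j = j := le_antisymm (rr_le σ u j) (by omega)
    rw [h2]
    have := lenW_ge σ u hσ (j + 1)
    omega

lemma vecMul_subst_apply (h : Fin m → ℝ) (i : Fin m) :
    Matrix.vecMul h ((substMatrix σ).map (fun n => (n : ℝ))) i = ((σ i).map h).sum := by
  rw [list_sum_map_count]
  simp only [Matrix.vecMul, dotProduct, Matrix.map_apply, substMatrix]
  exact Finset.sum_congr rfl (fun j _ => mul_comm _ _)

lemma sum_prefix_image (hu : IsFixedPoint σ u) (h : Fin m → ℝ) (n : ℕ) :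
    ∑ t ∈ Finset.range (lenW σ u n), h (u t)
      = ∑ t ∈ Finset.range n, Matrix.vecMul h ((substMatrix σ).map (fun n => (n : ℝ))) (u t) := by
  induction n with
  | zero => simp [lenW_zero]
  | succ n ih =>
    rw [Finset.sum_range_succ, ← ih, lenW_succ]
    rw [Finset.range_eq_Ico, ← Finset.sum_Ico_consecutive (fun t => h (u t))
      (Nat.zero_le (lenW σ u n)) (Nat.le_add_right _ _), ← Finset.range_eq_Ico]
    congr 1
    rw [Finset.sum_Ico_eq_sum_range]
    simp only [Nat.add_sub_cancel_left]
    rw [← Fin.sum_univ_eq_sum_range (fun i => h (u (lenW σ u n + i))) ((σ (u n)).length)]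
    rw [vecMul_subst_apply]
    rw [← list_sum_get]
    apply Finset.sum_congr rfl
    intro i _
    rw [u_letters σ u hu n i.val i.isLt]

end Comb

theorem pisot_fixed_point_bounded_distance {m : ℕ} (σ : Fin m → List (Fin m))
    (hσ : ∀ i, σ i ≠ [])
    -- `σ` is primitive
    (hprim : ∃ k : ℕ, ∀ i j : Fin m, 0 < ((substMatrix σ) ^ k) i j)
    -- the substitution matrix is diagonalizable over `ℂ`
    (hdiag : ∃ (C D : Matrix (Fin m) (Fin m) ℂ), IsUnit C.det ∧ D.IsDiag ∧
      (substMatrix σ).map (fun n => (n : ℂ)) = C * D * C⁻¹)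
    -- `σ` is Pisot: `lam` is a simple real eigenvalue `> 1` and all other
    -- eigenvalues have absolute value `< 1`
    (lam : ℝ) (hlam : 1 < lam)
    (hsimple : (Matrix.charpoly ((substMatrix σ).map (fun n => (n : ℂ)))).rootMultiplicity
      ((lam : ℂ)) = 1)
    (hsmall : ∀ z : ℂ, (Matrix.charpoly ((substMatrix σ).map (fun n => (n : ℂ)))).IsRoot z →
      z ≠ (lam : ℂ) → ‖z‖ < 1)
    -- `w = (ℓ_1,…,ℓ_m)` is a positive left eigenvector
    (w : Fin m → ℝ) (hw : ∀ i, 0 < w i)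
    (hweig : Matrix.vecMul w ((substMatrix σ).map (fun n => (n : ℝ))) = lam • w)
    -- `v` is the positive right eigenvector, normalized
    (v : Fin m → ℝ) (hv : ∀ i, 0 < v i)
    (hveig : Matrix.mulVec ((substMatrix σ).map (fun n => (n : ℝ))) v = lam • v)
    (hvnorm : ∑ i, v i = 1)
    (δ : ℝ) (hδ : δ = ∑ i, w i * v i)
    -- `u` is a one-sided fixed point of `σ`, and `x_j = Σ_{t<j} ℓ_{u_t}`
    (u : ℕ → Fin m) (hu : IsFixedPoint σ u)
    (x : ℕ → ℝ) (hx : ∀ j, x j = ∑ t ∈ Finset.range j, w (u t)) :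
    (∃ C : ℝ, ∀ j : ℕ, |x j - j * δ| ≤ C) ∧
      BDE (Set.range x) (Set.range fun j : ℕ => (j : ℝ) * δ) := by
  classical
  haveI hne : Nonempty (Fin m) := ⟨u 0⟩
  set A : Matrix (Fin m) (Fin m) ℝ := (substMatrix σ).map (fun n => (n : ℝ)) with hA
  set g : Fin m → ℝ := fun i => w i - δ with hg
  have hgvr : ∑ i, g i * v i = 0 := by
    simp only [hg, sub_mul]
    rw [Finset.sum_sub_distrib, ← Finset.mul_sum, hvnorm, mul_one, ← hδ, sub_self]
  set Ac : Matrix (Fin m) (Fin m) ℂ := (substMatrix σ).map (fun n => (n : ℂ)) with hAc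
  set vc : Fin m → ℂ := fun i => (v i : ℂ) with hvc
  set gc : Fin m → ℂ := fun i => (g i : ℂ) with hgc
  have hvcne : vc ≠ 0 := by
    intro h0
    have := congrFun h0 (u 0)
    simp only [hvc, Pi.zero_apply, Complex.ofReal_eq_zero] at this
    exact (hv (u 0)).ne' this
  have hveigc : Ac.mulVec vc = (lam : ℂ) • vc := by
    funext i
    have hre := congrFun hveig i
    simp only [Matrix.mulVec, dotProduct, Matrix.map_apply, Pi.smul_apply,
      smul_eq_mul] at hre
    have h2 : ((∑ j, ((substMatrix σ i j : ℝ)) * v j : ℝ) : ℂ) = ((lam * v i : ℝ) : ℂ) :=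
      congrArg _ hre
    push_cast at h2
    simp only [hAc, hvc, Matrix.mulVec, dotProduct, Matrix.map_apply, Pi.smul_apply,
      smul_eq_mul]
    exact h2
  have hgvc : gc ⬝ᵥ vc = 0 := by
    have h2 : ((∑ i, g i * v i : ℝ) : ℂ) = 0 := by rw [hgvr]; norm_num
    rw [← h2]
    simp only [dotProduct, hgc, hvc]
    push_cast
    rfl
  obtain ⟨C, D, hC, hD, hfact⟩ := hdiag
  obtain ⟨K, θ, hK0, hθ0, hθ1, hbound⟩ :=
    spectral_bound Ac C D hC hD hfact (lam : ℂ) hsimple hsmall vc hvcne hveigc gc hgvc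
  have hAcA : Ac = A.map Complex.ofReal := by
    ext i j
    simp [hAc, hA, Matrix.map_apply]
  have hpow : ∀ N : ℕ, Ac ^ N = (A ^ N).map Complex.ofReal := by
    intro N
    rw [hAcA]
    have := (map_pow (Complex.ofRealHom.mapMatrix) A N).symm
    simp only [RingHom.mapMatrix_apply] at this
    exact this
  have hbridge : ∀ (N : ℕ) (i : Fin m), |Matrix.vecMul g (A ^ N) i| ≤ K * θ ^ N := by
    intro N i
    have h1 : ((Matrix.vecMul g (A ^ N) i : ℝ) : ℂ) = Matrix.vecMul gc (Ac ^ N) i := by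
      rw [hpow]
      simp only [Matrix.vecMul, dotProduct, Matrix.map_apply, hgc]
      push_cast
      rfl
    calc |Matrix.vecMul g (A ^ N) i|
        = ‖((Matrix.vecMul g (A ^ N) i : ℝ) : ℂ)‖ := by rw [Complex.norm_real, Real.norm_eq_abs]
      _ = ‖Matrix.vecMul gc (Ac ^ N) i‖ := by rw [h1]
      _ ≤ K * θ ^ N := hbound N i
  set L : ℕ := Finset.univ.sup (fun i => (σ i).length) with hL
  have hLle : ∀ i, (σ i).length ≤ L := fun i =>
    Finset.le_sup (f := fun i => (σ i).length) (Finset.mem_univ i)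
  -- the main recursive estimate
  have main : ∀ N M q : ℕ, |∑ t ∈ Finset.range q, Matrix.vecMul g (A ^ M) (u t)|
      ≤ (L : ℝ) * K * θ ^ M * (∑ k ∈ Finset.range N, θ ^ k) + K * θ ^ (M + N) * q := by
    intro N
    induction N with
    | zero =>
      intro M q
      simp only [Finset.range_zero, Finset.sum_empty, mul_zero, Nat.add_zero, zero_add]
      calc |∑ t ∈ Finset.range q, Matrix.vecMul g (A ^ M) (u t)|
          ≤ ∑ t ∈ Finset.range q, |Matrix.vecMul g (A ^ M) (u t)| :=
            Finset.abs_sum_le_sum_abs _ _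
        _ ≤ ∑ _t ∈ Finset.range q, K * θ ^ M :=
            Finset.sum_le_sum (fun t _ => hbridge M (u t))
        _ = K * θ ^ M * q := by
            rw [Finset.sum_const, Finset.card_range, nsmul_eq_mul]
            ring
    | succ N ih =>
      intro M q
      set s : ℕ := rr σ u q with hs
      have hdecomp : ∑ t ∈ Finset.range q, Matrix.vecMul g (A ^ M) (u t)
          = (∑ t ∈ Finset.range s, Matrix.vecMul g (A ^ (M + 1)) (u t))
            + ∑ t ∈ Finset.Ico (lenW σ u s) q, Matrix.vecMul g (A ^ M) (u t) := by
        rw [Finset.range_eq_Ico, ← Finset.sum_Ico_consecutive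
          (fun t => Matrix.vecMul g (A ^ M) (u t)) (Nat.zero_le _) (lenW_rr_le σ u q),
          ← Finset.range_eq_Ico]
        congr 1
        rw [sum_prefix_image σ u hu _ s, ← hA]
        apply Finset.sum_congr rfl
        intro t _
        rw [Matrix.vecMul_vecMul, ← pow_succ]
      rw [hdecomp]
      have herr : |∑ t ∈ Finset.Ico (lenW σ u s) q, Matrix.vecMul g (A ^ M) (u t)|
          ≤ (L : ℝ) * (K * θ ^ M) := by
        calc |∑ t ∈ Finset.Ico (lenW σ u s) q, Matrix.vecMul g (A ^ M) (u t)|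
            ≤ ∑ t ∈ Finset.Ico (lenW σ u s) q, |Matrix.vecMul g (A ^ M) (u t)| :=
              Finset.abs_sum_le_sum_abs _ _
          _ ≤ ∑ _t ∈ Finset.Ico (lenW σ u s) q, K * θ ^ M :=
              Finset.sum_le_sum (fun t _ => hbridge M (u t))
          _ = ((q - lenW σ u s : ℕ) : ℝ) * (K * θ ^ M) := by
              rw [Finset.sum_const, Nat.card_Ico, nsmul_eq_mul]
          _ ≤ (L : ℝ) * (K * θ ^ M) := by
              apply mul_le_mul_of_nonneg_right _ (by positivity)
              have h1 := lt_lenW_rr σ u hσ q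
              rw [lenW_succ] at h1
              rw [← hs] at h1
              have h2 := hLle (u s)
              have h3 : q - lenW σ u s ≤ L := by omega
              exact_mod_cast Nat.cast_le.mpr h3
      have hih := ih (M + 1) s
      have hsq : (s : ℝ) ≤ q := Nat.cast_le.mpr (rr_le σ u q)
      have hgeomsucc : (∑ k ∈ Finset.range (N + 1), θ ^ k)
          = θ * (∑ k ∈ Finset.range N, θ ^ k) + 1 := geom_sum_succ
      have hpowpos : (0:ℝ) ≤ θ ^ (M + (N + 1)) := by positivity
      have hexp : θ ^ (M + 1 + N) = θ ^ (M + (N + 1)) := by ring_nf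
      calc |(∑ t ∈ Finset.range s, Matrix.vecMul g (A ^ (M + 1)) (u t))
            + ∑ t ∈ Finset.Ico (lenW σ u s) q, Matrix.vecMul g (A ^ M) (u t)|
          ≤ |∑ t ∈ Finset.range s, Matrix.vecMul g (A ^ (M + 1)) (u t)|
            + |∑ t ∈ Finset.Ico (lenW σ u s) q, Matrix.vecMul g (A ^ M) (u t)| := abs_add_le _ _
        _ ≤ ((L : ℝ) * K * θ ^ (M + 1) * (∑ k ∈ Finset.range N, θ ^ k)
            + K * θ ^ (M + 1 + N) * s) + (L : ℝ) * (K * θ ^ M) := add_le_add hih herr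
        _ ≤ (L : ℝ) * K * θ ^ M * (∑ k ∈ Finset.range (N + 1), θ ^ k)
            + K * θ ^ (M + (N + 1)) * q := by
            rw [hgeomsucc, hexp]
            have h4 : K * θ ^ (M + (N + 1)) * s ≤ K * θ ^ (M + (N + 1)) * q :=
              mul_le_mul_of_nonneg_left hsq (by positivity)
            have h5 : (L : ℝ) * K * θ ^ (M + 1) * (∑ k ∈ Finset.range N, θ ^ k)
                = (L : ℝ) * K * θ ^ M * (θ * (∑ k ∈ Finset.range N, θ ^ k)) := by
              rw [pow_succ]; ring
            nlinarith [h4]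
  -- conclude the uniform bound
  set C0 : ℝ := (L : ℝ) * K * (1 - θ)⁻¹ with hC0
  have hone : (0:ℝ) < 1 - θ := by linarith
  have hgeom : ∀ N : ℕ, (∑ k ∈ Finset.range N, θ ^ k) ≤ (1 - θ)⁻¹ := by
    intro N
    rw [inv_eq_one_div, le_div_iff₀ hone]
    have := geom_sum_mul θ N
    have hpN : (0:ℝ) ≤ θ ^ N := by positivity
    nlinarith [this]
  have hfinal : ∀ j : ℕ, |x j - j * δ| ≤ C0 := by
    intro j
    have hxj : x j - j * δ = ∑ t ∈ Finset.range j, Matrix.vecMul g (A ^ 0) (u t) := by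
      rw [hx j]
      simp only [pow_zero, Matrix.vecMul_one, hg]
      rw [Finset.sum_sub_distrib, Finset.sum_const, Finset.card_range, nsmul_eq_mul]
    have hb : ∀ N : ℕ, |x j - j * δ| ≤ C0 + K * θ ^ N * j := by
      intro N
      have h1 := main N 0 j
      rw [← hxj] at h1
      have h2 : (L : ℝ) * K * θ ^ 0 * (∑ k ∈ Finset.range N, θ ^ k) ≤ C0 := by
        rw [pow_zero, mul_one, hC0]
        exact mul_le_mul_of_nonneg_left (hgeom N) (by positivity)
      have h3 : θ ^ (0 + N) = θ ^ N := by rw [Nat.zero_add]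
      rw [h3] at h1
      linarith
    have hlim : Filter.Tendsto (fun N : ℕ => C0 + K * θ ^ N * (j : ℝ)) Filter.atTop
        (nhds (C0 + K * 0 * (j : ℝ))) := by
      apply Filter.Tendsto.add tendsto_const_nhds
      exact (((tendsto_pow_atTop_nhds_zero_of_lt_one hθ0 hθ1).const_mul K).mul_const (j : ℝ))
    have := ge_of_tendsto' hlim hb
    simpa using this
  have hC00 : 0 ≤ C0 := le_trans (abs_nonneg _) (hfinal 0)
  constructor
  · exact ⟨C0, hfinal⟩
  · -- bounded distance equivalence
    have hδpos : 0 < δ := by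
      rw [hδ]
      exact Finset.sum_pos (fun i _ => mul_pos (hw i) (hv i)) Finset.univ_nonempty
    have hxmono : StrictMono x := by
      apply strictMono_nat_of_lt_succ
      intro n
      rw [hx, hx, Finset.sum_range_succ]
      exact lt_add_of_pos_right _ (hw (u n))
    have hfmono : StrictMono (fun j : ℕ => (j : ℝ) * δ) := by
      intro a b hab
      exact mul_lt_mul_of_pos_right (Nat.cast_lt.mpr hab) hδpos
    refine ⟨C0 + 1, by linarith, ?_⟩
    refine ⟨(Equiv.ofInjective x hxmono.injective).symm.trans
      (Equiv.ofInjective _ hfmono.injective), ?_⟩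
    intro y
    set j : ℕ := (Equiv.ofInjective x hxmono.injective).symm y with hj
    have hy : (y : ℝ) = x j := by
      have h1 := (Equiv.ofInjective x hxmono.injective).apply_symm_apply y
      exact (congrArg Subtype.val h1).symm
    have hφ : ((((Equiv.ofInjective x hxmono.injective).symm.trans
        (Equiv.ofInjective _ hfmono.injective)) y : ℝ)) = (j : ℝ) * δ := rfl
    rw [hy, hφ]
    calc |x j - (j : ℝ) * δ| ≤ C0 := hfinal j
      _ < C0 + 1 := by linarith
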